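/- Let f ∈ F_r with r ≥ 1. Then |♭f| ≥ r + 1, with equality if and only if f is equal up to shift to q = (1, 2, …, r). -/

import Mathlib

open Finset

namespace KacCatalan

/-- A weight `f : ℤ → {×,·}` (with finitely many `×`) is encoded by the finite
set `f⁻¹(×) ⊆ ℤ`; membership `x ∈ f` means `f(x) = ×`. -/
abbrev Weight := Finset ℤ

/-- `f` and `g` are equal up to shift, i.e. the entries of `f` are obtained from
those of `g` by adding a fixed constant. -/
def UpToShift (f g : Weight) : Prop := ∃ k : ℤ, f = g.image (fun x => x + k)

/-- The largest entry `a_r` of `f` (junk value `0` for `f = ∅`). -/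
def maxD (f : Weight) : ℤ := f.max.getD 0

/-- The smallest entry `a₁` of `f` (junk value `0` for `f = ∅`). -/
def minD (f : Weight) : ℤ := f.min.getD 0

/-- The tally function `T_f : ℤ → ℤ`, the unique function with `T_f(a_r) = 1`
and `T_f(b+1) = T_f(b) + 1` if `f(b+1) = ×`, `T_f(b+1) = T_f(b) - 1` otherwise
(given here in closed form). -/
noncomputable def tally (f : Weight) (b : ℤ) : ℤ :=
  1 + 2 * (((f ∩ Finset.Ioc (maxD f) b).card : ℤ) - ((f ∩ Finset.Ioc b (maxD f)).card : ℤ))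
    - (b - maxD f)

/-- Any finite set of integers omits some integer of the form `a + 1 + n`. -/
theorem exists_free (T : Finset ℤ) (a : ℤ) : ∃ n : ℕ, a + 1 + (n : ℤ) ∉ T := by
  by_contra h
  push_neg at h
  have hinj : Function.Injective (fun n : ℕ => a + 1 + (n : ℤ)) := by
    intro m n hmn
    have : ((m : ℤ)) = (n : ℤ) := by simpa using hmn
    exact_mod_cast this
  exact (Set.infinite_of_injective_forall_mem hinj (fun n => h n)) T.finite_toSet

/-- The end of the cap starting at `a`: the smallest integer greater than `a`
avoiding the (finite) forbidden set `T`. -/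
def capEnd (T : Finset ℤ) (a : ℤ) : ℤ := a + 1 + (Nat.find (exists_free T a) : ℤ)

/-- Build the caps starting at the points of the given list (processed in order,
which will be right-to-left on the number line), where `S = f⁻¹(×)` and `used`
records the ends of the already-constructed caps.  A cap is encoded as a pair
`(start, end)` with `start < end`. -/
def buildCaps (S : Finset ℤ) : List ℤ → Finset ℤ → Finset (ℤ × ℤ)
  | [], _ => ∅
  | a :: rest, used =>
      insert (a, capEnd (S ∪ used) a)
        (buildCaps S rest (insert (capEnd (S ∪ used) a) used))

/-- The cap diagram `D_cap(f)`: one cap starting at each entry of `f`,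
constructed from right to left, each cap ending at the smallest integer greater
than its start that is not in `f⁻¹(×)` and not the end of an
already-constructed cap. -/
def Dcap (f : Weight) : Finset (ℤ × ℤ) :=
  buildCaps f ((f.sort (· ≤ ·)).reverse) ∅

/-- A set of caps `D` matches `f` if every cap of `D` joins an integer where
`f` takes the value `·` to an integer where `f` takes the value `×`. -/
def Matches (D : Finset (ℤ × ℤ)) (f : Weight) : Prop :=
  ∀ c ∈ D, (c.1 ∈ f ∧ c.2 ∉ f) ∨ (c.1 ∉ f ∧ c.2 ∈ f)

/-- `♭f`: the set of `g ∈ F_r` (`r = #f`) such that `D_cap(g)` matches `f`. -/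
def flat (f : Weight) : Set Weight :=
  {g | g.card = f.card ∧ Matches (Dcap g) f}

/-- `L^a_b f`: change the value of `f` at `a` from `×` to `·` and at `b`
from `·` to `×`. -/
def Lmove (f : Weight) (b a : ℤ) : Weight := insert b (f.erase a)

/-- The move `L^a_b f` is legal. -/
def IsLegal (f : Weight) (b a : ℤ) : Prop :=
  b < a ∧ b ∉ f ∧ a ∈ f ∧
    (∀ x : ℤ, b ≤ x → x < a → 1 ≤ tally f a - tally f x) ∧
    tally f a - tally f b = 1

/-- `LM f = {i ∈ {1,…,r} : L^a_{a-1-2i} f is a legal move}`, where `a = a_r`. -/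
def LM (f : Weight) : Set ℕ :=
  {i | 1 ≤ i ∧ i ≤ f.card ∧ IsLegal f (maxD f - 1 - 2 * (i : ℤ)) (maxD f)}

/-- `♭_{1/2} f`: those `g ∈ ♭f` whose cap diagram contains the cap joining
`a = a_r` to `a + 1`. -/
def flatHalf (f : Weight) : Set Weight :=
  {g | g ∈ flat f ∧ (maxD f, maxD f + 1) ∈ Dcap g}

/-- `♭_i f = {L^a_{a-1-2i} h : h ∈ ♭_{1/2} f} ∩ ♭f`. -/
def flatI (f : Weight) (i : ℕ) : Set Weight :=
  ((fun h => Lmove h (maxD f - 1 - 2 * (i : ℤ)) (maxD f)) '' flatHalf f) ∩ flat f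

/-- `max f`: integer points where `T_f` has a (strict) local maximum. -/
def maxSet (f : Weight) : Set ℤ :=
  {c | tally f (c - 1) < tally f c ∧ tally f (c + 1) < tally f c}

/-- `min f`: integer points where `T_f` has a (strict) local minimum. -/
def minSet (f : Weight) : Set ℤ :=
  {c | tally f c < tally f (c - 1) ∧ tally f c < tally f (c + 1)}

/-- `f₊`: points where `T_f` increases on both sides. -/
def fplus (f : Weight) : Set ℤ :=
  {c | tally f c - tally f (c - 1) = 1 ∧ tally f (c + 1) - tally f c = 1}

/-- `f₋`: points where `T_f` decreases on both sides. -/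
def fminus (f : Weight) : Set ℤ :=
  {c | tally f c - tally f (c - 1) = -1 ∧ tally f (c + 1) - tally f c = -1}

/-- `p = (2, 4, …, 2r)`. -/
noncomputable def pSet (r : ℕ) : Weight := (Finset.Icc (1 : ℤ) (r : ℤ)).image (fun x => 2 * x)

/-- `q = (1, 2, …, r)`. -/
noncomputable def qSet (r : ℕ) : Weight := Finset.Icc (1 : ℤ) (r : ℤ)

end KacCatalan

namespace KacCatalan

/-!
Read `g` as a walk that steps up at the points of `g` and down elsewhere; the cap of
`D_cap(g)` starting at `s ∈ g` ends where the walk started at `s` first drops below its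
starting height (`Dcap_eq`). We add the points of `f` one at a time, each to the right of the
previous ones. If `a` lies to the right of `f`, the elements of `♭(insert a f)` containing `a`
are exactly the `insert a h` with `h ∈ ♭f`: the cap `(a, a + 1)` is isolated, and caps of `h`
reaching `a` are pushed past it without changing their matching condition. So
`|♭(insert a f)| = |♭f| + |B|`, where `B` is the set of elements avoiding `a`. `B` is never
empty: matching each point of `f`, greedily from left to right, with the nearest unused point
to its left gives a weight whose caps all end in `f`. If `f` is not an interval, either `♭f` is
already too large or `a - 1 ∉ f`, and then `insert (a - 1) f` is a second element of `B`. If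
`f = [u, v]`, the cap ending at `v` has to enclose every other cap, so `B = {[2u - v - 1, u - 1]}`.
-/

section Balance

variable {g g₁ g₂ : Finset ℤ} {s t b c e x : ℤ}

noncomputable def balance (g : Finset ℤ) (s c : ℤ) : ℤ := 2 * (#(g ∩ Ioc s c) : ℤ) - (c - s)

@[simp]
lemma balance_self (g : Finset ℤ) (s : ℤ) : balance g s s = 0 := by
  simp [balance]

lemma balance_add (h₁ : s ≤ b) (h₂ : b ≤ c) : balance g s c = balance g s b + balance g b c := by
  have hunion : g ∩ Ioc s c = g ∩ Ioc s b ∪ g ∩ Ioc b c := by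
    rw [← inter_union_distrib_left, Ioc_union_Ioc_eq_Ioc h₁ h₂]
  have hdisj : Disjoint (g ∩ Ioc s b) (g ∩ Ioc b c) :=
    (Ioc_disjoint_Ioc_of_le le_rfl).mono inter_subset_right inter_subset_right
  simp only [balance, hunion, card_union_of_disjoint hdisj]
  push_cast
  ring

lemma balance_add_one (h : s ≤ c) :
    balance g s (c + 1) = balance g s c + if c + 1 ∈ g then 1 else -1 := by
  rw [balance_add h (by omega : c ≤ c + 1)]
  have hsingle : Ioc c (c + 1) = {c + 1} := by ext; simp; omega
  by_cases hc : c + 1 ∈ g <;> simp [balance, hsingle, hc]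

lemma balance_le (g : Finset ℤ) (s c : ℤ) : balance g s c ≤ 2 * #g - (c - s) := by
  have : #(g ∩ Ioc s c) ≤ #g := card_le_card inter_subset_left
  simp only [balance]
  omega

lemma exists_balance_neg (g : Finset ℤ) (s : ℤ) : ∃ n : ℕ, balance g s (s + 1 + n) < 0 :=
  ⟨2 * #g, by have := balance_le g s (s + 1 + (2 * #g : ℕ)); push_cast at this ⊢; omega⟩

/-- The end of the cap of `D_cap(g)` starting at `s ∈ g` (see `Dcap_eq`). -/
noncomputable def matchEnd (g : Finset ℤ) (s : ℤ) : ℤ := s + 1 + Nat.find (exists_balance_neg g s)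

lemma lt_matchEnd (g : Finset ℤ) (s : ℤ) : s < matchEnd g s := by
  simp only [matchEnd]
  omega

lemma balance_matchEnd_neg (g : Finset ℤ) (s : ℤ) : balance g s (matchEnd g s) < 0 :=
  Nat.find_spec (exists_balance_neg g s)

lemma balance_nonneg_of_lt_matchEnd (h₁ : s ≤ c) (h₂ : c < matchEnd g s) : 0 ≤ balance g s c := by
  obtain rfl | h₁ := h₁.eq_or_lt
  · simp
  have hc : c = s + 1 + (c - s - 1).toNat := by omega
  have hlt : (c - s - 1).toNat < Nat.find (exists_balance_neg g s) := by
    simp only [matchEnd] at h₂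
    omega
  have := Nat.find_min (exists_balance_neg g s) hlt
  rw [hc]
  omega

lemma matchEnd_le_of_balance_neg (h₁ : s < c) (h₂ : balance g s c < 0) : matchEnd g s ≤ c := by
  have hc : c = s + 1 + (c - s - 1).toNat := by omega
  have : Nat.find (exists_balance_neg g s) ≤ (c - s - 1).toNat := Nat.find_le (by rwa [← hc])
  simp only [matchEnd]
  omega

lemma matchEnd_eq_of (h₁ : s < e) (h₂ : balance g s e < 0)
    (h₃ : ∀ c, s < c → c < e → 0 ≤ balance g s c) : matchEnd g s = e := by
  refine (matchEnd_le_of_balance_neg h₁ h₂).antisymm (not_lt.1 fun h => ?_)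
  have := h₃ _ (lt_matchEnd g s) h
  have := balance_matchEnd_neg g s
  omega

lemma balance_matchEnd (g : Finset ℤ) (s : ℤ) : balance g s (matchEnd g s) = -1 := by
  have hlt := lt_matchEnd g s
  have hstep := balance_add_one (g := g) (c := matchEnd g s - 1) (by omega : s ≤ matchEnd g s - 1)
  have := balance_nonneg_of_lt_matchEnd (g := g) (by omega : s ≤ matchEnd g s - 1) (by omega)
  have := balance_matchEnd_neg g s
  simp only [sub_add_cancel] at hstep
  split_ifs at hstep <;> omega

lemma matchEnd_notMem (g : Finset ℤ) (s : ℤ) : matchEnd g s ∉ g := by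
  intro hmem
  have hlt := lt_matchEnd g s
  have hstep := balance_add_one (g := g) (c := matchEnd g s - 1) (by omega : s ≤ matchEnd g s - 1)
  have := balance_nonneg_of_lt_matchEnd (g := g) (by omega : s ≤ matchEnd g s - 1) (by omega)
  have := balance_matchEnd g s
  simp only [sub_add_cancel, if_pos hmem] at hstep
  omega

lemma matchEnd_le_matchEnd (h₁ : s < t) (h₂ : t < matchEnd g s) : matchEnd g t ≤ matchEnd g s := by
  have := balance_add (g := g) h₁.le h₂.le
  have := balance_nonneg_of_lt_matchEnd (g := g) h₁.le h₂
  have := balance_matchEnd g s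
  exact matchEnd_le_of_balance_neg h₂ (by omega)

lemma matchEnd_injOn (g : Finset ℤ) : Set.InjOn (matchEnd g) g := by
  suffices ∀ s t, s < t → t ∈ g → matchEnd g s ≠ matchEnd g t by
    intro s hs t ht hst
    by_contra hne
    obtain h | h := lt_or_gt_of_ne hne
    · exact this s t h ht hst
    · exact this t s h hs hst.symm
  intro s t hst ht heq
  have hlt := lt_matchEnd g t
  have hsplit := balance_add (g := g) hst.le (by omega : t ≤ matchEnd g s)
  have hstep := balance_add_one (g := g) (c := t - 1) (by omega : s ≤ t - 1)
  have := balance_nonneg_of_lt_matchEnd (g := g) (by omega : s ≤ t - 1) (by omega)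
  have := balance_matchEnd g s
  have := heq ▸ balance_matchEnd g t
  simp only [sub_add_cancel, if_pos ht] at hstep
  omega

lemma matchEnd_le (g : Finset ℤ) (s : ℤ) : matchEnd g s ≤ s + 2 * #g + 1 := by
  have := balance_matchEnd g s
  have := balance_le g s (matchEnd g s)
  omega

lemma matchEnd_eq_add_one (h : s + 1 ∉ g) : matchEnd g s = s + 1 :=
  matchEnd_eq_of (by omega) (by simp [balance_add_one le_rfl, h]) fun _ _ _ => by omega

lemma exists_matchEnd_eq (h₁ : s < c) (h₂ : c < matchEnd g s) (hc : c ∉ g) :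
    ∃ t ∈ g, s < t ∧ t < c ∧ matchEnd g t = c := by
  have hlast : balance g (c - 1) c = -1 := by
    simpa [hc] using balance_add_one (g := g) (le_refl (c - 1))
  obtain ⟨w, ⟨hsw, hwc, hw⟩, hwmax⟩ := Int.exists_greatest_of_bdd
    (P := fun w => s ≤ w ∧ w < c ∧ 0 ≤ balance g w c) ⟨c, fun _ h => h.2.1.le⟩
    ⟨s, le_rfl, h₁, balance_nonneg_of_lt_matchEnd h₁.le h₂⟩
  have hneg : ∀ b, w < b → b < c → balance g b c < 0 := fun b hwb hbc =>
    not_le.1 fun hb => (hwmax b ⟨by omega, hbc, hb⟩).not_gt hwb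
  have hwc' : w + 1 < c := by
    by_contra h
    obtain rfl : w = c - 1 := by omega
    omega
  have hsplit := balance_add (g := g) (le_of_lt (lt_add_one w)) hwc'.le
  have hstep := balance_add_one (g := g) (le_refl w)
  have hnext := hneg (w + 1) (by omega) hwc'
  have hmem : w + 1 ∈ g := by
    by_contra h
    simp only [h, if_false, balance_self] at hstep
    omega
  simp only [hmem, if_true, balance_self] at hstep
  refine ⟨w + 1, hmem, by omega, hwc', matchEnd_eq_of hwc' (by omega) fun b hb₁ hb₂ => ?_⟩
  have := balance_add (g := g) hb₁.le hb₂.le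
  have := hneg b (by omega) hb₂
  omega

lemma balance_congr (h : ∀ y, s < y → y ≤ c → (y ∈ g₁ ↔ y ∈ g₂)) :
    balance g₁ s c = balance g₂ s c := by
  have : g₁ ∩ Ioc s c = g₂ ∩ Ioc s c := by
    ext y
    simp only [mem_inter, mem_Ioc]
    constructor <;> rintro ⟨hy, hy₁, hy₂⟩ <;> simp_all
  simp only [balance, this]

lemma matchEnd_congr (h : ∀ y, s < y → y ≤ matchEnd g₂ s → (y ∈ g₁ ↔ y ∈ g₂)) :
    matchEnd g₁ s = matchEnd g₂ s := by
  have hb : ∀ c, s < c → c ≤ matchEnd g₂ s → balance g₁ s c = balance g₂ s c :=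
    fun c _ hc => balance_congr fun y hy₁ hy₂ => h y hy₁ (hy₂.trans hc)
  refine matchEnd_eq_of (lt_matchEnd g₂ s) ?_ fun c h₁ h₂ => ?_
  · rw [hb _ (lt_matchEnd g₂ s) le_rfl]
    exact balance_matchEnd_neg g₂ s
  · rw [hb c h₁ h₂.le]
    exact balance_nonneg_of_lt_matchEnd h₁.le h₂

lemma matchEnd_insert_of_lt (h : matchEnd g s < x) : matchEnd (insert x g) s = matchEnd g s :=
  matchEnd_congr fun y _ hy => by simp only [mem_insert, or_iff_right (by omega : y ≠ x)]

lemma matchEnd_insert_of_le (h : x ≤ s) : matchEnd (insert x g) s = matchEnd g s :=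
  matchEnd_congr fun y hy _ => by simp only [mem_insert, or_iff_right (by omega : y ≠ x)]

lemma lt_matchEnd_insert (h : x ≤ matchEnd g s) : x < matchEnd (insert x g) s := by
  have hne : matchEnd (insert x g) s ≠ x := fun he =>
    matchEnd_notMem (insert x g) s (by rw [he]; exact mem_insert_self x g)
  refine lt_of_le_of_ne (not_lt.1 fun hlt => ?_) hne.symm
  have : matchEnd g s = matchEnd (insert x g) s :=
    matchEnd_congr fun y _ hy => by simp only [mem_insert, or_iff_right (by omega : y ≠ x)]
  omega

end Balance

section CapDiagram

lemma capEnd_eq {T : Finset ℤ} {a e : ℤ} (h₁ : a < e) (h₂ : e ∉ T)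
    (h₃ : ∀ c, a < c → c < e → c ∈ T) : capEnd T a = e := by
  have he : e = a + 1 + (e - a - 1).toNat := by omega
  have : Nat.find (exists_free T a) = (e - a - 1).toNat := by
    rw [Nat.find_eq_iff, ← he]
    exact ⟨h₂, fun m hm => not_not.2 (h₃ _ (by omega) (by omega))⟩
  simp only [capEnd, this]
  omega

lemma capEnd_union_image_matchEnd {g S : Finset ℤ} {a : ℤ} (hag : a ∈ g) (hS : S ⊆ g)
    (hSa : ∀ x ∈ S, a < x) (hgS : ∀ x ∈ g, a < x → x ∈ S) :
    capEnd (g ∪ S.image (matchEnd g)) a = matchEnd g a := by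
  refine capEnd_eq (lt_matchEnd g a) ?_ fun c hc₁ hc₂ => ?_
  · simp only [mem_union, mem_image, not_or, not_exists, not_and]
    exact ⟨matchEnd_notMem g a, fun x hx hxe =>
      (hSa x hx).ne' (matchEnd_injOn g (mem_coe.2 (hS hx)) (mem_coe.2 hag) hxe)⟩
  · by_cases hcg : c ∈ g
    · exact mem_union_left _ hcg
    obtain ⟨t, htg, hat, -, hte⟩ := exists_matchEnd_eq hc₁ hc₂ hcg
    exact mem_union_right _ (mem_image.2 ⟨t, hgS t htg hat, hte⟩)

/-- Loop invariant of `buildCaps`: the ends already used are those of the caps starting above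
the points still to be processed. -/
lemma buildCaps_eq (g : Finset ℤ) (l : List ℤ) (hl : l.Pairwise (· > ·)) (hlg : ∀ s ∈ l, s ∈ g)
    (habove : ∀ x ∈ g, x ∉ l → ∀ y ∈ l, y < x) :
    buildCaps g l ((g.filter (· ∉ l)).image (matchEnd g)) =
      l.toFinset.image fun s => (s, matchEnd g s) := by
  induction l with
  | nil => simp [buildCaps]
  | cons a l ih =>
    obtain ⟨hal, hl⟩ := List.pairwise_cons.1 hl
    have hag : a ∈ g := hlg a List.mem_cons_self
    have hend : capEnd (g ∪ (g.filter (· ∉ a :: l)).image (matchEnd g)) a = matchEnd g a := by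
      refine capEnd_union_image_matchEnd hag (filter_subset _ g)
        (fun x hx => habove x (mem_filter.1 hx).1 (mem_filter.1 hx).2 a List.mem_cons_self)
        fun x hx hax => mem_filter.2 ⟨hx, fun hxl => ?_⟩
      rcases List.mem_cons.1 hxl with rfl | hxl
      exacts [lt_irrefl _ hax, (hal x hxl).not_gt hax]
    have hused : insert (matchEnd g a) ((g.filter (· ∉ a :: l)).image (matchEnd g)) =
        (g.filter (· ∉ l)).image (matchEnd g) := by
      rw [← image_insert]
      congr 1
      ext x
      simp only [mem_insert, mem_filter, List.mem_cons, not_or]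
      constructor
      · rintro (rfl | ⟨hx, -, hxl⟩)
        · exact ⟨hag, fun hal' => lt_irrefl _ (hal _ hal')⟩
        · exact ⟨hx, hxl⟩
      · rintro ⟨hx, hxl⟩
        by_cases hxa : x = a
        · exact Or.inl hxa
        · exact Or.inr ⟨hx, hxa, hxl⟩
    have ih' := ih hl (fun s hs => hlg s (List.mem_cons_of_mem a hs)) fun x hx hxl y hy => by
      by_cases hxa : x = a
      · exact hxa ▸ hal y hy
      · exact habove x hx (by simp [hxa, hxl]) y (List.mem_cons_of_mem a hy)
    rw [buildCaps, hend, hused, ih', List.toFinset_cons, image_insert]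

lemma Dcap_eq (g : Finset ℤ) : Dcap g = g.image fun s => (s, matchEnd g s) := by
  have h := buildCaps_eq g (g.sort (· ≤ ·)).reverse
    (List.pairwise_reverse.2 (sortedLT_sort g).pairwise) (by simp) (by simp +contextual)
  rw [filter_eq_empty_iff.2 (by simp), image_empty] at h
  simpa [Dcap] using h

lemma mem_flat_iff {f g : Weight} :
    g ∈ flat f ↔ #g = #f ∧
      ∀ s ∈ g, (s ∈ f ∧ matchEnd g s ∉ f) ∨ (s ∉ f ∧ matchEnd g s ∈ f) := by
  simp [flat, Matches, Dcap_eq]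

end CapDiagram

section Flat

variable {f g h : Weight} {a s y : ℤ}

lemma exists_le_of_mem_flat (hg : g ∈ flat f) (hs : s ∈ g) :
    ∃ y ∈ f, s ≤ y ∧ y ≤ s + 2 * #f + 1 := by
  obtain ⟨hcard, hcond⟩ := mem_flat_iff.1 hg
  have := lt_matchEnd g s
  have := matchEnd_le g s
  rcases hcond s hs with ⟨hsf, -⟩ | ⟨-, hef⟩
  · exact ⟨s, hsf, le_rfl, by omega⟩
  · exact ⟨_, hef, by omega, by omega⟩

lemma le_of_mem_flat (hg : g ∈ flat f) (hf : ∀ y ∈ f, y ≤ a) (hs : s ∈ g) : s ≤ a := by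
  obtain ⟨y, hy, hsy, -⟩ := exists_le_of_mem_flat hg hs
  exact hsy.trans (hf y hy)

lemma lt_of_mem_flat (hg : g ∈ flat f) (hf : ∀ y ∈ f, y < a) (hs : s ∈ g) : s < a := by
  obtain ⟨y, hy, hsy, -⟩ := exists_le_of_mem_flat hg hs
  exact hsy.trans_lt (hf y hy)

lemma flat_finite (f : Weight) : (flat f).Finite := by
  refine (f.biUnion fun y => Icc (y - 2 * #f - 1) y).powerset.finite_toSet.subset fun g hg => ?_
  simp only [coe_powerset, Set.mem_preimage, Set.mem_powerset_iff, coe_subset]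
  intro s hs
  obtain ⟨y, hy, h₁, h₂⟩ := exists_le_of_mem_flat hg hs
  exact mem_biUnion.2 ⟨y, hy, mem_Icc.2 ⟨by omega, h₁⟩⟩

lemma flat_empty : flat ∅ = {∅} := by
  ext g
  simp +contextual [mem_flat_iff]

/-- Sending each cap of `g` to its endpoint in `f` is injective, and `#g = #f`. -/
lemma exists_matchEnd_eq_of_mem_flat (hg : g ∈ flat f) (hy : y ∈ f) :
    y ∈ g ∨ ∃ s ∈ g, s ∉ f ∧ matchEnd g s = y := by
  obtain ⟨hcard, hcond⟩ := mem_flat_iff.1 hg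
  have hmaps : ∀ s (hs : s ∈ g), (if s ∈ f then s else matchEnd g s) ∈ f := fun s hs => by
    split_ifs with hsf
    · exact hsf
    · exact ((hcond s hs).resolve_left fun h => hsf h.1).2
  have hinj : ∀ s t (hs : s ∈ g) (ht : t ∈ g),
      (if s ∈ f then s else matchEnd g s) = (if t ∈ f then t else matchEnd g t) → s = t := by
    intro s t hs ht hst
    split_ifs at hst with hsf htf htf
    · exact hst
    · exact absurd (hst ▸ hs) (matchEnd_notMem g t)
    · exact absurd (hst ▸ ht) (matchEnd_notMem g s)
    · exact matchEnd_injOn g (mem_coe.2 hs) (mem_coe.2 ht) hst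
  obtain ⟨s, hs, rfl⟩ := surj_on_of_inj_on_of_card_le _ hmaps hinj hcard.ge y hy
  split_ifs with hsf
  · exact Or.inl hs
  · exact Or.inr ⟨s, hs, hsf, rfl⟩

lemma insert_mem_flat_insert_iff (hf : ∀ y ∈ f, y < a) (hh : ∀ y ∈ h, y < a) :
    insert a h ∈ flat (insert a f) ↔ h ∈ flat f := by
  have haf : a ∉ f := fun ha => (hf a ha).false
  have hah : a ∉ h := fun ha => (hh a ha).false
  have hend : ∀ s ∈ h, (matchEnd (insert a h) s ∈ insert a f ↔ matchEnd h s ∈ f) := by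
    intro s hs
    by_cases hlt : matchEnd h s < a
    · rw [matchEnd_insert_of_lt hlt, mem_insert, or_iff_right hlt.ne]
    · have := lt_matchEnd_insert (not_lt.1 hlt)
      refine iff_of_false ?_ fun he => hlt (hf _ he)
      rw [mem_insert, not_or]
      exact ⟨this.ne', fun he => (hf _ he).not_gt this⟩
  have hstart : ∀ s ∈ h, (s ∈ insert a f ↔ s ∈ f) := fun s hs =>
    by rw [mem_insert, or_iff_right (hh s hs).ne]
  have hcap : matchEnd (insert a h) a = a + 1 :=
    matchEnd_eq_add_one (by simpa using fun h' => (hh _ h').not_gt (lt_add_one a))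
  rw [mem_flat_iff, mem_flat_iff, card_insert_of_notMem hah, card_insert_of_notMem haf,
    forall_mem_insert, hcap, Nat.add_right_cancel_iff]
  refine and_congr_right fun _ => ?_
  have hfirst : (a ∈ insert a f ∧ a + 1 ∉ insert a f) ∨ (a ∉ insert a f ∧ a + 1 ∈ insert a f) :=
    Or.inl ⟨mem_insert_self a f, by simpa using fun h' => (hf _ h').not_gt (lt_add_one a)⟩
  simp only [hfirst, true_and]
  exact forall₂_congr fun s hs => by rw [hstart s hs, hend s hs]

lemma ncard_flat_insert (hf : ∀ y ∈ f, y < a) :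
    (flat (insert a f)).ncard = (flat f).ncard + {g ∈ flat (insert a f) | a ∉ g}.ncard := by
  have hlt : ∀ h ∈ flat f, ∀ y ∈ h, y < a := fun h hh _ hy => lt_of_mem_flat hh hf hy
  have hsplit : flat (insert a f) = insert a '' flat f ∪ {g ∈ flat (insert a f) | a ∉ g} := by
    ext g
    refine ⟨fun hg => ?_, ?_⟩
    · by_cases hag : a ∈ g
      · have hle : ∀ y ∈ insert a f, y ≤ a := by simpa using fun y hy => (hf y hy).le
        have hlt' : ∀ y ∈ g.erase a, y < a := fun y hy =>
          (le_of_mem_flat hg hle (mem_of_mem_erase hy)).lt_of_ne (ne_of_mem_erase hy)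
        rw [← insert_erase hag] at hg ⊢
        exact Or.inl ⟨_, (insert_mem_flat_insert_iff hf hlt').1 hg, rfl⟩
      · exact Or.inr ⟨hg, hag⟩
    · rintro (⟨h, hh, rfl⟩ | ⟨hg, -⟩)
      exacts [(insert_mem_flat_insert_iff hf (hlt h hh)).2 hh, hg]
  have hdisj : Disjoint (insert a '' flat f) {g ∈ flat (insert a f) | a ∉ g} :=
    Set.disjoint_left.2 fun _ ⟨h, _, hg⟩ ⟨_, hag⟩ => hag (hg ▸ mem_insert_self a h)
  have hinj : Set.InjOn (insert a) (flat f) := fun h₁ hh₁ h₂ hh₂ heq => by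
    rw [← erase_insert fun ha => (hlt h₁ hh₁ a ha).false,
      ← erase_insert fun ha => (hlt h₂ hh₂ a ha).false, heq]
  conv_lhs => rw [hsplit]
  rw [Set.ncard_union_eq hdisj ((flat_finite f).image _)
    ((flat_finite _).subset fun _ hg => hg.1), hinj.ncard_image]

end Flat

section Partner

variable {f g : Weight} {a x : ℤ}

/-- The greedy step: the new point `a` is matched with the nearest point `x` to its left
that is not yet used. -/
lemma image_matchEnd_insert (himg : g.image (matchEnd g) = f) (hf : ∀ y ∈ f, y < a)
    (hxa : x < a) (hxf : x ∉ f) (hxg : x ∉ g) (hgap : ∀ y, x < y → y < a → y ∈ f ∨ y ∈ g) :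
    (insert x g).image (matchEnd (insert x g)) = insert a f := by
  have hend : ∀ s ∈ g, matchEnd g s ∈ f := fun s hs => himg ▸ mem_image_of_mem _ hs
  have hleft : ∀ s ∈ g, s < x → matchEnd g s < x := by
    intro s hs hsx
    by_contra! hge
    have hne : matchEnd g s ≠ x := fun he => hxf (he ▸ hend s hs)
    obtain ⟨t, htg, -, -, hte⟩ := exists_matchEnd_eq hsx (lt_of_le_of_ne hge hne.symm) hxg
    exact hxf (hte ▸ hend t htg)
  have hkeep : ∀ s ∈ g, matchEnd (insert x g) s = matchEnd g s := by
    intro s hs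
    rcases lt_or_gt_of_ne (fun h : s = x => hxg (h ▸ hs)) with hsx | hsx
    · exact matchEnd_insert_of_lt (hleft s hs hsx)
    · exact matchEnd_insert_of_le hsx.le
  have hnew : matchEnd (insert x g) x = a := by
    set m := matchEnd (insert x g) x
    have hxm := lt_matchEnd (insert x g) x
    refine le_antisymm (not_lt.1 fun ham => ?_) (not_lt.1 fun hma => ?_)
    · -- `a` would lie inside the new cap, so it would end a cap of `g`; but those end in `f`
      have haG : a ∉ insert x g := by
        simp only [mem_insert, not_or]
        exact ⟨hxa.ne', fun ha => (hf _ (hend a ha)).not_ge (lt_matchEnd g a).le⟩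
      obtain ⟨t, htG, hxt, -, hte⟩ := exists_matchEnd_eq hxa ham haG
      have htg : t ∈ g := (mem_insert.1 htG).resolve_left hxt.ne'
      exact (hf _ (hend t htg)).ne (hkeep t htg ▸ hte)
    · -- `m < a` lies in `f`, so it ends a cap of `g`, which is nested in the new cap
      have hmf : m ∈ f := ((hgap m hxm hma).resolve_right fun hm =>
        matchEnd_notMem (insert x g) x (mem_insert_of_mem hm))
      obtain ⟨t, htg, hte⟩ := mem_image.1 (himg ▸ hmf : m ∈ g.image (matchEnd g))
      have htx : x < t := lt_of_not_ge fun htx =>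
        ((hleft t htg (lt_of_le_of_ne htx fun h => hxg (h ▸ htg))).trans hxm).ne hte
      refine htx.ne (matchEnd_injOn (insert x g) (mem_insert_self x g)
        (mem_coe.2 (mem_insert_of_mem htg)) ?_)
      rw [hkeep t htg, hte]
  rw [image_insert, hnew, image_congr fun s hs => hkeep s (mem_coe.1 hs), himg]

lemma exists_disjoint_image_matchEnd_eq (f : Weight) :
    ∃ g : Weight, Disjoint g f ∧ g.image (matchEnd g) = f := by
  induction f using Finset.induction_on_max with
  | empty => exact ⟨∅, by simp, rfl⟩
  | insert a f hf ih =>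
    obtain ⟨g, hdisj, himg⟩ := ih
    have hga : ∀ s ∈ g, s < a := fun s hs =>
      (lt_matchEnd g s).trans (hf _ (himg ▸ mem_image_of_mem _ hs))
    set P : ℤ → Prop := fun z => z < a ∧ z ∉ f ∪ g
    have hP : ∃ z, P z := by
      set m := (insert a (f ∪ g)).min' (insert_nonempty _ _)
      have hm : ∀ z ∈ insert a (f ∪ g), m ≤ z := fun z hz => min'_le _ z hz
      exact ⟨m - 1, by linarith [hm a (mem_insert_self _ _)],
        fun hz => by linarith [hm _ (mem_insert_of_mem hz)]⟩
    obtain ⟨x, ⟨hxa, hxfg⟩, hxmax⟩ :=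
      Int.exists_greatest_of_bdd ⟨a, fun z hz => hz.1.le⟩ hP
    rw [mem_union, not_or] at hxfg
    have hgap : ∀ y, x < y → y < a → y ∈ f ∨ y ∈ g := fun y hxy hya => by
      by_contra hy
      exact (hxmax y ⟨hya, by rwa [mem_union]⟩).not_gt hxy
    refine ⟨insert x g, ?_, image_matchEnd_insert himg hf hxa hxfg.1 hxfg.2 hgap⟩
    rw [disjoint_insert_left, disjoint_insert_right, mem_insert, not_or]
    exact ⟨⟨hxa.ne, hxfg.1⟩, fun ha => (hga a ha).false, hdisj⟩

lemma exists_mem_flat_disjoint (f : Weight) : ∃ g ∈ flat f, Disjoint g f := by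
  obtain ⟨g, hdisj, himg⟩ := exists_disjoint_image_matchEnd_eq f
  refine ⟨g, mem_flat_iff.2 ⟨?_, fun s hs => Or.inr ⟨disjoint_left.1 hdisj hs, ?_⟩⟩, hdisj⟩
  · rw [← himg, card_image_of_injOn (matchEnd_injOn g)]
  · exact himg ▸ mem_image_of_mem _ hs

lemma insert_sub_one_mem_flat_insert (hf : ∀ y ∈ f, y < a) (ha : a - 1 ∉ f) :
    insert (a - 1) f ∈ flat (insert a f) := by
  have haf : a ∉ f := fun h => (hf a h).false
  have haG : a ∉ insert (a - 1) f := by simp [haf, (sub_one_lt a).ne']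
  have hcap : matchEnd (insert (a - 1) f) (a - 1) = a := by
    simpa using matchEnd_eq_add_one (g := insert (a - 1) f) (s := a - 1) (by simpa using haG)
  rw [mem_flat_iff, card_insert_of_notMem ha, card_insert_of_notMem haf, forall_mem_insert, hcap]
  refine ⟨rfl, Or.inr ⟨by simp [ha], mem_insert_self a f⟩,
    fun s hs => Or.inl ⟨mem_insert_of_mem hs, ?_⟩⟩
  have hsa : s < a - 1 := lt_of_le_of_ne (Int.le_sub_one_of_lt (hf s hs)) fun h => ha (h ▸ hs)
  rw [mem_insert, not_or]
  refine ⟨fun he => hsa.ne (matchEnd_injOn _ (mem_insert_of_mem hs) (mem_insert_self _ _) ?_),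
    fun he => matchEnd_notMem _ s (mem_insert_of_mem he)⟩
  · rw [he, hcap]

end Partner

section Interval

variable {g : Weight} {s₀ u v : ℤ}

lemma mem_Ico_of_mem_flat_Icc (hg : g ∈ flat (Icc u v)) (hv : v ∉ g) (hs₀g : s₀ ∈ g)
    (hs₀u : s₀ < u) (hs₀v : matchEnd g s₀ = v) : ∀ s ∈ g, s₀ ≤ s ∧ s < u := by
  obtain ⟨-, hcond⟩ := mem_flat_iff.1 hg
  have hlt : ∀ s ∈ g, s < v := fun s hs =>
    (le_of_mem_flat hg (fun y hy => (mem_Icc.1 hy).2) hs).lt_of_ne fun h => hv (h ▸ hs)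
  have hout : ∀ s ∈ g, s ∉ Icc u v := by
    intro s hs hsf
    have hsv := hlt s hs
    rw [mem_Icc] at hsf
    have hle := matchEnd_le_matchEnd (g := g) (s := s₀) (t := s) (by omega) (by omega)
    have := lt_matchEnd g s
    have := ((hcond s hs).resolve_right fun h => h.1 (mem_Icc.2 hsf)).2
    simp only [mem_Icc, not_and_or, not_le] at this
    omega
  intro s hs
  have hsf := hout s hs
  have hsv := hlt s hs
  simp only [mem_Icc, not_and_or, not_le] at hsf
  refine ⟨not_lt.1 fun hss₀ => ?_, by omega⟩
  have hend := ((hcond s hs).resolve_left fun h => hout s hs h.1).2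
  rw [mem_Icc] at hend
  have hle := matchEnd_le_matchEnd (g := g) hss₀ (by omega)
  exact hss₀.ne (matchEnd_injOn g (mem_coe.2 hs) (mem_coe.2 hs₀g) (by omega))

lemma eq_Icc_of_mem_flat_Icc (huv : u ≤ v) (hg : g ∈ flat (Icc u v)) (hv : v ∉ g) :
    g = Icc (2 * u - v - 1) (u - 1) := by
  have hcard := (mem_flat_iff.1 hg).1
  rw [Int.card_Icc] at hcard
  obtain ⟨s₀, hs₀g, hs₀f, hs₀v⟩ :=
    (exists_matchEnd_eq_of_mem_flat hg (right_mem_Icc.2 huv)).resolve_left hv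
  have hs₀u : s₀ < u := by
    have := hs₀v ▸ lt_matchEnd g s₀
    simp only [mem_Icc, not_and_or, not_le] at hs₀f
    omega
  have hmem := mem_Ico_of_mem_flat_Icc hg hv hs₀g hs₀u hs₀v
  -- the cap `(s₀, v)` contains the other `#g - 1` points of `g`, which fixes its length
  have hs₀ : s₀ = 2 * u - v - 1 := by
    have hinter : g ∩ Ioc s₀ v = g.erase s₀ := by
      ext s
      simp only [mem_inter, mem_Ioc, mem_erase]
      exact ⟨fun h => ⟨fun hs => by omega, h.1⟩, fun h =>
        ⟨h.2, lt_of_le_of_ne (hmem s h.2).1 (Ne.symm h.1), by linarith [(hmem s h.2).2]⟩⟩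
    have hbal := balance_matchEnd g s₀
    rw [hs₀v, balance, hinter, card_erase_of_mem hs₀g, hcard] at hbal
    omega
  subst hs₀
  refine eq_of_subset_of_card_le
    (fun s hs => mem_Icc.2 ⟨(hmem s hs).1, by linarith [(hmem s hs).2]⟩) ?_
  rw [hcard, Int.card_Icc]
  omega

end Interval

section OrdConnected

variable {f : Finset ℤ} {a : ℤ}

lemma ordConnected_insert_iff (hf : ∀ y ∈ f, y < a) :
    (↑(insert a f) : Set ℤ).OrdConnected ↔ (↑f : Set ℤ).OrdConnected ∧ (f = ∅ ∨ a - 1 ∈ f) := by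
  constructor
  · intro h
    refine ⟨⟨fun x hx y hy z hz => ?_⟩, or_iff_not_imp_left.2 fun hne => ?_⟩
    · have hz' : z ∈ insert a f := h.out (by simp [mem_coe.1 hx]) (by simp [mem_coe.1 hy]) hz
      exact (mem_insert.1 hz').resolve_left fun hza => (hf y hy).not_ge (hza ▸ hz.2)
    · obtain ⟨x, hx⟩ := nonempty_iff_ne_empty.2 hne
      have : a - 1 ∈ insert a f := h.out (by simp [hx]) (by simp)
        ⟨Int.le_sub_one_of_lt (hf x hx), (sub_one_lt a).le⟩
      exact (mem_insert.1 this).resolve_left (sub_one_lt a).ne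
  · rintro ⟨hconn, hgap⟩
    refine ⟨fun x hx y hy z hz => ?_⟩
    simp only [coe_insert, Set.mem_insert_iff, mem_coe] at hx hy ⊢
    obtain ⟨hxz, hzy⟩ := hz
    rcases hx with rfl | hx
    · rcases hy with rfl | hy
      · exact Or.inl (le_antisymm hzy hxz)
      · exact absurd (hf y hy) (by omega)
    rcases hy with rfl | hy
    · rcases eq_or_lt_of_le hzy with hza | hza
      · exact Or.inl hza
      · exact Or.inr (hconn.out hx (hgap.resolve_left (ne_empty_of_mem hx)) ⟨hxz, by omega⟩)
    · exact Or.inr (hconn.out hx hy ⟨hxz, hzy⟩)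

lemma eq_Icc_of_ordConnected (hne : f.Nonempty) (h : (↑f : Set ℤ).OrdConnected) :
    f = Icc (f.min' hne) (f.max' hne) := by
  ext y
  refine ⟨fun hy => mem_Icc.2 ⟨min'_le f y hy, le_max' f y hy⟩, fun hy => ?_⟩
  exact mem_coe.1 (h.out (f.min'_mem hne) (f.max'_mem hne) (mem_Icc.1 hy))

lemma upToShift_qSet_iff (f : Weight) : UpToShift f (qSet #f) ↔ (↑f : Set ℤ).OrdConnected := by
  constructor
  · rintro ⟨k, hk⟩
    rw [hk, qSet, image_add_right_Icc, coe_Icc]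
    exact Set.ordConnected_Icc
  · intro h
    obtain rfl | hne := f.eq_empty_or_nonempty
    · exact ⟨0, by simp [qSet]⟩
    obtain ⟨m, M, rfl⟩ : ∃ m M, f = Icc m M := ⟨_, _, eq_Icc_of_ordConnected hne h⟩
    have hmM : m ≤ M := nonempty_Icc.1 hne
    refine ⟨m - 1, ?_⟩
    rw [qSet, image_add_right_Icc, Int.card_Icc, Int.toNat_of_nonneg (by omega)]
    congr 1 <;> ring

end OrdConnected

theorem card_add_one_le_ncard_flat_and_eq_iff (f : Weight) :
    #f + 1 ≤ (flat f).ncard ∧ ((flat f).ncard = #f + 1 ↔ (↑f : Set ℤ).OrdConnected) := by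
  induction f using Finset.induction_on_max with
  | empty => simp [flat_empty, Set.ordConnected_empty]
  | insert a f hf ih =>
    obtain ⟨ih_le, ih_iff⟩ := ih
    have haf : a ∉ f := fun h => (hf a h).false
    rw [ncard_flat_insert hf, card_insert_of_notMem haf]
    set B := {g ∈ flat (insert a f) | a ∉ g}
    have hBfin : B.Finite := (flat_finite _).subset fun _ hg => hg.1
    obtain ⟨g₀, hg₀, hdisj⟩ := exists_mem_flat_disjoint (insert a f)
    have hg₀B : g₀ ∈ B := ⟨hg₀, disjoint_right.1 hdisj (mem_insert_self a f)⟩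
    have hB : 1 ≤ B.ncard := (Set.ncard_pos hBfin).2 ⟨g₀, hg₀B⟩
    refine ⟨by omega, ⟨fun heq => ?_, fun hconn => ?_⟩⟩
    · refine (ordConnected_insert_iff hf).2
        ⟨ih_iff.1 (by omega), or_iff_not_imp_right.2 fun ha => ?_⟩
      by_contra hne
      obtain ⟨y, hy⟩ := nonempty_iff_ne_empty.2 hne
      have hg₁B : insert (a - 1) f ∈ B :=
        ⟨insert_sub_one_mem_flat_insert hf ha, by simp [haf, (sub_one_lt a).ne']⟩
      have hne : g₀ ≠ insert (a - 1) f := fun h =>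
        disjoint_left.1 hdisj (h ▸ mem_insert_of_mem hy) (mem_insert_of_mem hy)
      have := (Set.one_lt_ncard_iff hBfin).2 ⟨g₀, _, hg₀B, hg₁B, hne⟩
      omega
    · obtain ⟨u, hua, hIcc⟩ : ∃ u ≤ a, insert a f = Icc u a := by
        refine ⟨_, min'_le _ a (mem_insert_self a f), ?_⟩
        convert eq_Icc_of_ordConnected (insert_nonempty a f) hconn
        exact (le_max' _ a (mem_insert_self a f)).antisymm
          (max'_le _ _ _ fun y hy => (mem_insert.1 hy).elim le_of_eq fun hy => (hf y hy).le)
      have hB1 : B.ncard ≤ 1 := (Set.ncard_le_one_iff hBfin).2 fun {g₁ g₂} hg₁ hg₂ => by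
        obtain ⟨hg₁, ha₁⟩ := hg₁
        obtain ⟨hg₂, ha₂⟩ := hg₂
        rw [hIcc] at hg₁ hg₂
        rw [eq_Icc_of_mem_flat_Icc hua hg₁ ha₁, eq_Icc_of_mem_flat_Icc hua hg₂ ha₂]
      have := ih_iff.2 ((ordConnected_insert_iff hf).1 hconn).1
      omega

theorem flat_card_ge_general (r : ℕ) (f : Weight) (hf : f.card = r) :
    r + 1 ≤ (flat f).ncard ∧ ((flat f).ncard = r + 1 ↔ UpToShift f (qSet r)) := by
  subst hf
  rw [upToShift_qSet_iff]
  exact card_add_one_le_ncard_flat_and_eq_iff f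

/-- If `#f = r ≥ 1`, then `|♭f| ≥ r + 1`, with equality iff
`f = q = (1, 2, …, r)` up to shift. -/
theorem flat_card_ge (r : ℕ) (hr : 1 ≤ r) (f : Weight) (hf : f.card = r) :
    r + 1 ≤ (flat f).ncard ∧ ((flat f).ncard = r + 1 ↔ UpToShift f (qSet r)) :=
  flat_card_ge_general r f hf

end KacCatalan
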